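/- arXiv:2602.05504 — 2 statements merged into one kernel-verified Lean document; each statement's English description precedes it below -/
import Mathlib

section
/- Let (T_k) be random times with T_0 = 0 and i.i.d. rate-1 exponential increments, let α > 0 and n ≥ 1. Then for every k with 1 ≤ k ≤ n, E[ Σ_{l=k}^n Σ_{m=k}^l Σ_{j=1}^k e^{α(T_m − T_l)} e^{α(T_j − T_l)} (m − j) ] ≤ max{ (1+2α)(1+α)⁴/(2α⁴), (1+2α)(1+α)³/α⁴ }, and in particular this expectation is at most (1+2α)⁵/α⁴. -/
open MeasureTheory ProbabilityTheory

lemma exp_moment_expMeasure {c : ℝ} (hc : 0 ≤ c) :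
    Integrable (fun x => Real.exp (-(c * x))) (expMeasure 1) ∧
    ∫ x, Real.exp (-(c * x)) ∂(expMeasure 1) = (1 + c)⁻¹ := by
  have h1c : (0:ℝ) < 1 + c := by linarith
  have hmeas : Measurable fun x : ℝ => Real.exp (-(c * x)) :=
    (measurable_id.const_mul c).neg.exp
  have hpdf : Measurable (gammaPDF 1 1) :=
    (measurable_gammaPDFReal 1 1).ennreal_ofReal
  have key : ∫⁻ x, ENNReal.ofReal (Real.exp (-(c * x))) ∂(expMeasure 1)
      = ENNReal.ofReal ((1 + c)⁻¹) := by
    rw [expMeasure, gammaMeasure,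
      lintegral_withDensity_eq_lintegral_mul _ hpdf hmeas.ennreal_ofReal]
    have heq : ∀ x : ℝ, (gammaPDF 1 1 * fun x => ENNReal.ofReal (Real.exp (-(c * x)))) x
        = ENNReal.ofReal ((1 + c)⁻¹) * gammaPDF 1 (1 + c) x := by
      intro x
      rcases lt_or_ge x 0 with hx | hx
      · simp [gammaPDF_of_neg hx]
      · rw [Pi.mul_apply, gammaPDF_of_nonneg hx, gammaPDF_of_nonneg hx,
          ← ENNReal.ofReal_mul (by positivity), ← ENNReal.ofReal_mul (by positivity)]
        congr 1
        rw [show (1:ℝ) - 1 = 0 by ring, Real.rpow_zero, Real.rpow_one, Real.rpow_one,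
          Real.Gamma_one]
        rw [mul_assoc, ← Real.exp_add, show -(1*x) + -(c*x) = -((1+c)*x) by ring]
        field_simp
    have hpdf2 : Measurable (gammaPDF 1 (1 + c)) :=
      (measurable_gammaPDFReal 1 (1 + c)).ennreal_ofReal
    rw [lintegral_congr heq, lintegral_const_mul _ hpdf2,
      lintegral_gammaPDF_eq_one zero_lt_one h1c, mul_one]
  constructor
  · refine ⟨hmeas.aestronglyMeasurable, ?_⟩
    rw [hasFiniteIntegral_iff_ofReal (ae_of_all _ fun x => (Real.exp_pos _).le), key]
    exact ENNReal.ofReal_lt_top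
  · rw [integral_eq_lintegral_of_nonneg_ae (ae_of_all _ fun x => (Real.exp_pos _).le)
      hmeas.aestronglyMeasurable, key, ENNReal.toReal_ofReal (by positivity)]

lemma term_integral {Ω : Type*} [MeasurableSpace Ω] (μ : Measure Ω) [IsProbabilityMeasure μ]
    (T : ℕ → Ω → ℝ) (hTmeas : ∀ k, Measurable (T k))
    (hindep : iIndepFun
      (fun k ω => T (k + 1) ω - T k ω) μ)
    (hexp : ∀ k, Measure.map (fun ω => T (k + 1) ω - T k ω) μ = expMeasure 1)
    (α : ℝ) (hα : 0 < α) {j m l : ℕ} (hjm : j ≤ m) (hml : m ≤ l) :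
    Integrable (fun ω => Real.exp (α * (T m ω - T l ω))
        * Real.exp (α * (T j ω - T l ω))) μ ∧
    ∫ ω, Real.exp (α * (T m ω - T l ω)) * Real.exp (α * (T j ω - T l ω)) ∂μ
      = ((1 + α)⁻¹) ^ (m - j) * ((1 + 2 * α)⁻¹) ^ (l - m) := by
  set X : ℕ → Ω → ℝ := fun i ω => T (i + 1) ω - T i ω with hX
  set c : ℕ → ℝ := fun i => if m ≤ i then 2 * α else α with hc
  set Y : ℕ → Ω → ℝ := fun i => (fun x => c i * x) ∘ X i with hY
  have hXmeas : ∀ i, Measurable (X i) := fun i => (hTmeas _).sub (hTmeas _)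
  have hYmeas : ∀ i, Measurable (Y i) := fun i => (measurable_const_mul _).comp (hXmeas i)
  have hYindep : iIndepFun Y μ :=
    hindep.comp (fun i x => c i * x) (fun i => measurable_const_mul _)
  have hcnn : ∀ i, 0 ≤ c i := by
    intro i; simp only [hc]; split_ifs <;> linarith
  -- telescoping
  have htel : ∀ a b : ℕ, a ≤ b → ∀ ω, ∑ i ∈ Finset.Ico a b, X i ω = T b ω - T a ω := by
    intro a b hab ω
    rw [Finset.sum_Ico_eq_sub _ hab, Finset.sum_range_sub (fun i => T i ω),
      Finset.sum_range_sub (fun i => T i ω)]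
    ring
  -- pointwise identity
  have hpt : (fun ω => Real.exp (α * (T m ω - T l ω)) * Real.exp (α * (T j ω - T l ω)))
      = fun ω => Real.exp ((-1) * (∑ i ∈ Finset.Ico j l, Y i) ω) := by
    funext ω
    rw [← Real.exp_add, Finset.sum_apply]
    congr 1
    have hsplit : ∑ i ∈ Finset.Ico j l, Y i ω
        = ∑ i ∈ Finset.Ico j m, Y i ω + ∑ i ∈ Finset.Ico m l, Y i ω :=
      (Finset.sum_Ico_consecutive _ hjm hml).symm
    have h1 : ∑ i ∈ Finset.Ico j m, Y i ω = α * (T m ω - T j ω) := by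
      have : ∀ i ∈ Finset.Ico j m, Y i ω = α * X i ω := by
        intro i hi
        simp only [hY, hc, Function.comp_apply]
        rw [if_neg (not_le.mpr (Finset.mem_Ico.mp hi).2)]
      rw [Finset.sum_congr rfl this, ← Finset.mul_sum, htel j m hjm ω]
    have h2 : ∑ i ∈ Finset.Ico m l, Y i ω = 2 * α * (T l ω - T m ω) := by
      have : ∀ i ∈ Finset.Ico m l, Y i ω = 2 * α * X i ω := by
        intro i hi
        simp only [hY, hc, Function.comp_apply]
        rw [if_pos (Finset.mem_Ico.mp hi).1]
      rw [Finset.sum_congr rfl this, ← Finset.mul_sum, htel m l hml ω]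
    rw [hsplit, h1, h2]
    ring
  -- per-factor integrability and value
  have hfac : ∀ i : ℕ, Integrable (fun ω => Real.exp ((-1) * Y i ω)) μ ∧
      mgf (Y i) μ (-1) = (1 + c i)⁻¹ := by
    intro i
    have hfun : (fun ω => Real.exp ((-1) * Y i ω))
        = (fun x => Real.exp (-(c i * x))) ∘ X i := by
      funext ω; simp only [hY, Function.comp_apply, neg_one_mul]
    have hint' := (exp_moment_expMeasure (hcnn i))
    constructor
    · rw [hfun]
      rw [← integrable_map_measure ?_ (hXmeas i).aemeasurable]
      · rw [hexp i]; exact hint'.1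
      · rw [hexp i]; exact hint'.1.aestronglyMeasurable
    · show (∫ ω, Real.exp ((-1) * Y i ω) ∂μ) = (1 + c i)⁻¹
      have hfun2 : (fun ω => Real.exp ((-1) * Y i ω))
          = fun ω => Real.exp (-(c i * X i ω)) := by
        funext ω; simp only [hY, Function.comp_apply, neg_one_mul]
      have hmap := integral_map (f := fun x : ℝ => Real.exp (-(c i * x)))
        (hXmeas i).aemeasurable (by rw [hexp i]; exact hint'.1.aestronglyMeasurable)
      rw [hexp i] at hmap
      rw [hfun2, ← hmap]
      exact hint'.2
  constructor
  · rw [hpt]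
    exact iIndepFun.integrable_exp_mul_sum hYindep hYmeas
      (fun i _ => (hfac i).1)
  · rw [hpt]
    have : (∫ ω, Real.exp ((-1) * (∑ i ∈ Finset.Ico j l, Y i) ω) ∂μ)
        = mgf (∑ i ∈ Finset.Ico j l, Y i) μ (-1) := rfl
    rw [this, iIndepFun.mgf_sum hYindep hYmeas]
    have hval : ∀ i ∈ Finset.Ico j l, mgf (Y i) μ (-1) = (1 + c i)⁻¹ :=
      fun i _ => (hfac i).2
    rw [Finset.prod_congr rfl hval, ← Finset.prod_Ico_consecutive _ hjm hml]
    have hp1 : ∀ i ∈ Finset.Ico j m, (1 + c i)⁻¹ = (1 + α)⁻¹ := by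
      intro i hi
      simp only [hc]
      rw [if_neg (not_le.mpr (Finset.mem_Ico.mp hi).2)]
    have hp2 : ∀ i ∈ Finset.Ico m l, (1 + c i)⁻¹ = (1 + 2 * α)⁻¹ := by
      intro i hi
      simp only [hc]
      rw [if_pos (Finset.mem_Ico.mp hi).1]
    rw [Finset.prod_congr rfl hp1, Finset.prod_congr rfl hp2,
      Finset.prod_const, Finset.prod_const, Nat.card_Ico, Nat.card_Ico]

lemma geom_sum_le' {q : ℝ} (h0 : 0 ≤ q) (h1 : q < 1) (N : ℕ) :
    ∑ i ∈ Finset.range N, q ^ i ≤ (1 - q)⁻¹ := by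
  rw [← tsum_geometric_of_lt_one h0 h1]
  exact Summable.sum_le_tsum _ (fun i _ => by positivity) (summable_geometric_of_lt_one h0 h1)

lemma coe_mul_geom_sum_le {q : ℝ} (h0 : 0 ≤ q) (h1 : q < 1) (N : ℕ) :
    ∑ i ∈ Finset.range N, (i : ℝ) * q ^ i ≤ q / (1 - q) ^ 2 := by
  have hs := hasSum_coe_mul_geometric_of_norm_lt_one (r := q)
    (by rwa [Real.norm_eq_abs, abs_of_nonneg h0])
  rw [← hs.tsum_eq]
  exact Summable.sum_le_tsum _ (fun i _ => by positivity) hs.summable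

lemma triple_sum_bound (α : ℝ) (hα : 0 < α) (n k : ℕ) (hk : 1 ≤ k) (hkn : k ≤ n) :
    ∑ l ∈ Finset.Icc k n, ∑ m ∈ Finset.Icc k l, ∑ j ∈ Finset.Icc 1 k,
      ((1 + α)⁻¹) ^ (m - j) * ((1 + 2 * α)⁻¹) ^ (l - m) * ((m : ℝ) - (j : ℝ))
    ≤ (1 + 2 * α) * (1 + α) ^ 2 / α ^ 4 := by
  set q : ℝ := (1 + α)⁻¹ with hqdef
  set p : ℝ := (1 + 2 * α)⁻¹ with hpdef
  have hq0 : 0 ≤ q := by positivity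
  have hq1 : q < 1 := by
    rw [hqdef]; rw [inv_lt_one_iff₀]; right; linarith
  have hp0 : 0 ≤ p := by positivity
  have hp1 : p < 1 := by
    rw [hpdef]; rw [inv_lt_one_iff₀]; right; linarith
  -- swap the l and m sums
  rw [Finset.sum_comm' (t' := Finset.Icc k n) (s' := fun m => Finset.Icc m n)
    (by intro l m; simp only [Finset.mem_Icc]; omega)]
  -- factor each inner double sum
  have hfac : ∀ m : ℕ, (∑ l ∈ Finset.Icc m n, ∑ j ∈ Finset.Icc 1 k,
      q ^ (m - j) * p ^ (l - m) * ((m : ℝ) - (j : ℝ)))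
      = (∑ l ∈ Finset.Icc m n, p ^ (l - m))
        * (∑ j ∈ Finset.Icc 1 k, q ^ (m - j) * ((m : ℝ) - (j : ℝ))) := by
    intro m
    rw [Finset.sum_mul_sum]
    exact Finset.sum_congr rfl fun l _ => Finset.sum_congr rfl fun j _ => by ring
  have hgeo : ∀ m : ℕ, (∑ l ∈ Finset.Icc m n, p ^ (l - m)) ≤ (1 - p)⁻¹ := by
    intro m
    rw [← Finset.Ico_add_one_right_eq_Icc, Finset.sum_Ico_eq_sum_range]
    have : ∀ i, p ^ (m + i - m) = p ^ i := fun i => by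
      congr 1; omega
    rw [Finset.sum_congr rfl fun i _ => this i]
    exact geom_sum_le' hp0 hp1 _
  have hGnn : ∀ m ∈ Finset.Icc k n, 0 ≤ ∑ j ∈ Finset.Icc 1 k,
      q ^ (m - j) * ((m : ℝ) - (j : ℝ)) := by
    intro m hm
    refine Finset.sum_nonneg fun j hj => ?_
    have hjk : j ≤ k := (Finset.mem_Icc.mp hj).2
    have hkm : k ≤ m := (Finset.mem_Icc.mp hm).1
    have : (j : ℝ) ≤ (m : ℝ) := by exact_mod_cast hjk.trans hkm
    have h1 : (0:ℝ) ≤ (m : ℝ) - j := by linarith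
    positivity
  -- reindex the inner j-sum for m = k + a
  have hG : ∀ m : ℕ, k ≤ m → (∑ j ∈ Finset.Icc 1 k, q ^ (m - j) * ((m : ℝ) - (j : ℝ)))
      = ∑ i ∈ Finset.range k, (((m - k) + i : ℕ) : ℝ) * q ^ ((m - k) + i) := by
    intro m hkm
    refine Finset.sum_nbij' (fun j => k - j) (fun i => k - i) ?_ ?_ ?_ ?_ ?_
    · intro j hj
      simp only [Finset.mem_Icc] at hj
      simp only [Finset.mem_range]; omega
    · intro i hi
      simp only [Finset.mem_range] at hi
      simp only [Finset.mem_Icc]; omega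
    · intro j hj
      simp only [Finset.mem_Icc] at hj
      show k - (k - j) = j; omega
    · intro i hi
      simp only [Finset.mem_range] at hi
      show k - (k - i) = i; omega
    · intro j hj
      simp only [Finset.mem_Icc] at hj
      have h1 : (m - k) + (k - j) = m - j := by omega
      rw [h1]
      have h2 : ((m - j : ℕ) : ℝ) = (m : ℝ) - (j : ℝ) := by
        rw [Nat.cast_sub (by omega)]
      rw [h2]; ring
  calc ∑ m ∈ Finset.Icc k n, ∑ l ∈ Finset.Icc m n, ∑ j ∈ Finset.Icc 1 k,
        q ^ (m - j) * p ^ (l - m) * ((m : ℝ) - (j : ℝ))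
      ≤ ∑ m ∈ Finset.Icc k n, (1 - p)⁻¹
          * (∑ j ∈ Finset.Icc 1 k, q ^ (m - j) * ((m : ℝ) - (j : ℝ))) := by
        refine Finset.sum_le_sum fun m hm => ?_
        rw [hfac m]
        exact mul_le_mul_of_nonneg_right (hgeo m) (hGnn m hm)
    _ = (1 - p)⁻¹ * ∑ m ∈ Finset.Icc k n,
          (∑ j ∈ Finset.Icc 1 k, q ^ (m - j) * ((m : ℝ) - (j : ℝ))) := by
        rw [Finset.mul_sum]
    _ ≤ (1 - p)⁻¹ * (2 * (q / (1 - q) ^ 2) * (1 - q)⁻¹) := by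
        refine mul_le_mul_of_nonneg_left ?_ (inv_nonneg.mpr (by linarith))
        -- reindex m
        have hm1 : ∑ m ∈ Finset.Icc k n,
            (∑ j ∈ Finset.Icc 1 k, q ^ (m - j) * ((m : ℝ) - (j : ℝ)))
            = ∑ a ∈ Finset.range (n + 1 - k), ∑ i ∈ Finset.range k,
                ((a + i : ℕ) : ℝ) * q ^ (a + i) := by
          rw [← Finset.Ico_add_one_right_eq_Icc, Finset.sum_Ico_eq_sum_range]
          refine Finset.sum_congr rfl fun a _ => ?_
          rw [hG (k + a) (by omega)]
          refine Finset.sum_congr rfl fun i _ => ?_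
          have : k + a - k = a := by omega
          rw [this]
        rw [hm1]
        have hsplit : ∀ a i : ℕ, ((a + i : ℕ) : ℝ) * q ^ (a + i)
            = ((a : ℝ) * q ^ a) * q ^ i + ((i : ℝ) * q ^ i) * q ^ a := by
          intro a i
          rw [pow_add]; push_cast; ring
        calc ∑ a ∈ Finset.range (n + 1 - k), ∑ i ∈ Finset.range k,
              ((a + i : ℕ) : ℝ) * q ^ (a + i)
            = (∑ a ∈ Finset.range (n + 1 - k), (a : ℝ) * q ^ a)
                * (∑ i ∈ Finset.range k, q ^ i)
              + (∑ a ∈ Finset.range (n + 1 - k), q ^ a)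
                * (∑ i ∈ Finset.range k, (i : ℝ) * q ^ i) := by
              rw [Finset.sum_mul_sum, Finset.sum_mul_sum, ← Finset.sum_add_distrib]
              refine Finset.sum_congr rfl fun a _ => ?_
              rw [← Finset.sum_add_distrib]
              refine Finset.sum_congr rfl fun i _ => ?_
              rw [hsplit a i]; ring
          _ ≤ (q / (1 - q) ^ 2) * (1 - q)⁻¹ + (1 - q)⁻¹ * (q / (1 - q) ^ 2) := by
              have h1q : 0 < 1 - q := by linarith
              refine add_le_add ?_ ?_
              · exact mul_le_mul (coe_mul_geom_sum_le hq0 hq1 _) (geom_sum_le' hq0 hq1 _)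
                  (Finset.sum_nonneg fun i _ => by positivity) (by positivity)
              · exact mul_le_mul (geom_sum_le' hq0 hq1 _) (coe_mul_geom_sum_le hq0 hq1 _)
                  (Finset.sum_nonneg fun i _ => by positivity) (by positivity)
          _ = 2 * (q / (1 - q) ^ 2) * (1 - q)⁻¹ := by ring
    _ = (1 + 2 * α) * (1 + α) ^ 2 / α ^ 4 := by
        rw [hqdef, hpdef]
        have h1 : (1:ℝ) + α ≠ 0 := by positivity
        have h2 : (1:ℝ) + 2 * α ≠ 0 := by positivity
        have h3 : (α:ℝ) ≠ 0 := ne_of_gt hα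
        field_simp
        rw [show (1:ℝ) + α - 1 = α by ring, show (1:ℝ) + 2 * α - 1 = 2 * α by ring,
          div_eq_iff (by positivity)]
        ring
/-- If `(T_k)` are random times with `T_0 = 0` and i.i.d. rate-1
exponential increments, then for `α > 0`, `n ≥ 1` and every `1 ≤ k ≤ n`,
`E[Σ_{l=k}^n Σ_{m=k}^l Σ_{j=1}^k e^{α(T_m−T_l)} e^{α(T_j−T_l)} (m−j)]
  ≤ max{(1+2α)(1+α)⁴/(2α⁴), (1+2α)(1+α)³/α⁴}`, and in particular it is at most
`(1+2α)⁵/α⁴`. -/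
theorem triple_sum_counting_bound {Ω : Type*} [MeasurableSpace Ω] (μ : Measure Ω)
    [IsProbabilityMeasure μ]
    (T : ℕ → Ω → ℝ) (hT0 : ∀ ω, T 0 ω = 0) (hTmeas : ∀ k, Measurable (T k))
    (hindep : iIndepFun
      (fun k ω => T (k + 1) ω - T k ω) μ)
    (hexp : ∀ k, Measure.map (fun ω => T (k + 1) ω - T k ω) μ = expMeasure 1)
    (α : ℝ) (hα : 0 < α) (n : ℕ) (hn : 1 ≤ n)
    (k : ℕ) (hk : 1 ≤ k) (hkn : k ≤ n) :
    (∫ ω, (∑ l ∈ Finset.Icc k n, ∑ m ∈ Finset.Icc k l, ∑ j ∈ Finset.Icc 1 k,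
        Real.exp (α * (T m ω - T l ω)) * Real.exp (α * (T j ω - T l ω))
          * ((m : ℝ) - (j : ℝ))) ∂μ
      ≤ max ((1 + 2 * α) * (1 + α) ^ 4 / (2 * α ^ 4))
          ((1 + 2 * α) * (1 + α) ^ 3 / α ^ 4)) ∧
    (∫ ω, (∑ l ∈ Finset.Icc k n, ∑ m ∈ Finset.Icc k l, ∑ j ∈ Finset.Icc 1 k,
        Real.exp (α * (T m ω - T l ω)) * Real.exp (α * (T j ω - T l ω))
          * ((m : ℝ) - (j : ℝ))) ∂μ
      ≤ (1 + 2 * α) ^ 5 / α ^ 4) := by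
  have hterm : ∀ {j m l : ℕ}, j ≤ m → m ≤ l →
      Integrable (fun ω => Real.exp (α * (T m ω - T l ω))
        * Real.exp (α * (T j ω - T l ω))) μ ∧
      ∫ ω, Real.exp (α * (T m ω - T l ω)) * Real.exp (α * (T j ω - T l ω)) ∂μ
        = ((1 + α)⁻¹) ^ (m - j) * ((1 + 2 * α)⁻¹) ^ (l - m) :=
    fun hjm hml => term_integral μ T hTmeas hindep hexp α hα hjm hml
  have hle : ∀ {j m l : ℕ}, l ∈ Finset.Icc k n → m ∈ Finset.Icc k l →
      j ∈ Finset.Icc 1 k → j ≤ m ∧ m ≤ l := by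
    intro j m l hl hm hj
    simp only [Finset.mem_Icc] at hl hm hj
    omega
  have hIeq : (∫ ω, (∑ l ∈ Finset.Icc k n, ∑ m ∈ Finset.Icc k l, ∑ j ∈ Finset.Icc 1 k,
      Real.exp (α * (T m ω - T l ω)) * Real.exp (α * (T j ω - T l ω))
        * ((m : ℝ) - (j : ℝ))) ∂μ)
      = ∑ l ∈ Finset.Icc k n, ∑ m ∈ Finset.Icc k l, ∑ j ∈ Finset.Icc 1 k,
          ((1 + α)⁻¹) ^ (m - j) * ((1 + 2 * α)⁻¹) ^ (l - m) * ((m : ℝ) - (j : ℝ)) := by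
    rw [integral_finset_sum _ (fun l hl => integrable_finset_sum _
      (fun m hm => integrable_finset_sum _
      (fun j hj => ((hterm (hle hl hm hj).1 (hle hl hm hj).2).1).mul_const _)))]
    refine Finset.sum_congr rfl fun l hl => ?_
    rw [integral_finset_sum _ (fun m hm => integrable_finset_sum _
      (fun j hj => ((hterm (hle hl hm hj).1 (hle hl hm hj).2).1).mul_const _))]
    refine Finset.sum_congr rfl fun m hm => ?_
    rw [integral_finset_sum _
      (fun j hj => ((hterm (hle hl hm hj).1 (hle hl hm hj).2).1).mul_const _)]
    refine Finset.sum_congr rfl fun j hj => ?_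
    rw [integral_mul_const, (hterm (hle hl hm hj).1 (hle hl hm hj).2).2]
  have hB := triple_sum_bound α hα n k hk hkn
  rw [hIeq]
  have hbase : (1 + 2 * α) * (1 + α) ^ 2 / α ^ 4 ≤ (1 + 2 * α) * (1 + α) ^ 3 / α ^ 4 := by
    refine div_le_div_of_nonneg_right ?_ (by positivity)
    nlinarith [mul_nonneg (mul_nonneg hα.le (sq_nonneg (1 + α)))
      (by linarith : (0:ℝ) ≤ 1 + 2 * α)]
  constructor
  · exact hB.trans (hbase.trans (le_max_right _ _))
  · refine hB.trans ?_
    refine div_le_div_of_nonneg_right ?_ (by positivity)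
    have h1 : (1 + α) ^ 2 ≤ (1 + 2 * α) ^ 2 := by nlinarith
    have h2 : (1 + 2 * α) ^ 2 ≤ (1 + 2 * α) ^ 4 := by nlinarith
    calc (1 + 2 * α) * (1 + α) ^ 2 ≤ (1 + 2 * α) * (1 + 2 * α) ^ 4 :=
          mul_le_mul_of_nonneg_left (h1.trans h2) (by linarith)
      _ = (1 + 2 * α) ^ 5 := by ring
end

section
/- Let (T_k) be random times with T_0 = 0 and i.i.d. rate-1 exponential increments, let α > 0 and n ≥ 1. Then for every k with 1 ≤ k ≤ n, E[ Σ_{l=k}^n Σ_{m=k}^l Σ_{j=1}^k e^{α(T_m − T_l)} e^{α(T_j − T_l)} (T_m − T_j) ] ≤ max{ (1+2α)(1+α)³/(2α⁴), (1+2α)(1+α)²/α⁴ }, and in particular this expectation is at most (1+2α)⁴/α⁴. -/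
open MeasureTheory ProbabilityTheory Real Set
open scoped ENNReal NNReal

section Helpers

lemma exp_pdf_eq (x : ℝ) :
    gammaPDFReal 1 1 x = if 0 ≤ x then Real.exp (-x) else 0 := by
  unfold gammaPDFReal
  split_ifs with h
  · rw [Real.Gamma_one, Real.one_rpow, sub_self, Real.rpow_zero, one_mul]
    norm_num
  · rfl

lemma integral_expMeasure_one (f : ℝ → ℝ) :
    ∫ x, f x ∂(expMeasure 1) = ∫ x in Ioi (0:ℝ), Real.exp (-x) * f x := by
  have h1 : expMeasure 1 = volume.withDensity
      (fun x => ((gammaPDFReal 1 1 x).toNNReal : ℝ≥0∞)) := rfl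
  rw [h1, integral_withDensity_eq_integral_smul (measurable_gammaPDFReal 1 1).real_toNNReal]
  have h2 : (fun x => (gammaPDFReal 1 1 x).toNNReal • f x)
      = Set.indicator (Ici (0:ℝ)) (fun x => Real.exp (-x) * f x) := by
    funext x
    simp only [NNReal.smul_def, smul_eq_mul, Real.coe_toNNReal', exp_pdf_eq,
      Set.indicator, mem_Ici]
    split_ifs with h
    · rw [max_eq_left (Real.exp_pos _).le]
    · simp
  rw [h2, integral_indicator measurableSet_Ici, integral_Ici_eq_integral_Ioi]

lemma integrable_expMeasure_one (f : ℝ → ℝ) (hf : Measurable f)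
    (h : IntegrableOn (fun x => Real.exp (-x) * f x) (Ioi 0)) :
    Integrable f (expMeasure 1) := by
  have h1 : expMeasure 1 = volume.withDensity
      (fun x => ((gammaPDFReal 1 1 x).toNNReal : ℝ≥0∞)) := rfl
  rw [h1, integrable_withDensity_iff_integrable_smul
    (measurable_gammaPDFReal 1 1).real_toNNReal]
  have h2 : (fun x => (gammaPDFReal 1 1 x).toNNReal • f x)
      = Set.indicator (Ici (0:ℝ)) (fun x => Real.exp (-x) * f x) := by
    funext x
    simp only [NNReal.smul_def, smul_eq_mul, Real.coe_toNNReal', exp_pdf_eq,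
      Set.indicator, mem_Ici]
    split_ifs with h
    · rw [max_eq_left (Real.exp_pos _).le]
    · simp
  rw [h2, integrable_indicator_iff measurableSet_Ici]
  rwa [integrableOn_Ici_iff_integrableOn_Ioi]

lemma integrable_exp_exp {c : ℝ} (hc : 0 < c) :
    Integrable (fun x => Real.exp (-(c*x))) (expMeasure 1) := by
  refine integrable_expMeasure_one _ (by fun_prop) ?_
  have h : (fun x : ℝ => Real.exp (-x) * Real.exp (-(c*x)))
      = fun x : ℝ => Real.exp (-(1+c) * x) := by
    funext x; rw [← Real.exp_add]; ring_nf
  rw [h]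
  exact exp_neg_integrableOn_Ioi 0 (by linarith)

lemma integral_exp_exp {c : ℝ} (hc : 0 < c) :
    ∫ x, Real.exp (-(c*x)) ∂(expMeasure 1) = 1/(1+c) := by
  rw [integral_expMeasure_one]
  have h : ∫ x in Ioi (0:ℝ), Real.exp (-x) * Real.exp (-(c*x))
      = ∫ x in Ioi (0:ℝ), x ^ ((1:ℝ)-1) * Real.exp (-((1+c) * x)) := by
    refine integral_congr_ae (Filter.Eventually.of_forall fun x => ?_)
    show Real.exp (-x) * Real.exp (-(c*x)) = x ^ ((1:ℝ)-1) * Real.exp (-((1+c) * x))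
    rw [sub_self, Real.rpow_zero, one_mul, ← Real.exp_add]
    ring_nf
  rw [h, Real.integral_rpow_mul_exp_neg_mul_Ioi one_pos (by linarith : (0:ℝ) < 1+c),
    Real.rpow_one, Real.Gamma_one, mul_one]

lemma integrable_mul_exp {c : ℝ} (hc : 0 < c) :
    Integrable (fun x => x * Real.exp (-(c*x))) (expMeasure 1) := by
  refine integrable_expMeasure_one _ (by fun_prop) ?_
  have h0 : IntegrableOn (fun x : ℝ => x ^ (1:ℝ) * Real.exp (-(1+c) * x ^ (1:ℝ)))
      (Ioi 0) := integrableOn_rpow_mul_exp_neg_mul_rpow (by norm_num) one_pos (by linarith)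
  have h : (fun x : ℝ => Real.exp (-x) * (x * Real.exp (-(c*x))))
      = fun x : ℝ => x ^ (1:ℝ) * Real.exp (-(1+c) * x ^ (1:ℝ)) := by
    funext x
    rw [Real.rpow_one,
      show Real.exp (-x) * (x * Real.exp (-(c*x))) = x * (Real.exp (-x) * Real.exp (-(c*x)))
        from by ring, ← Real.exp_add]
    ring_nf
  rw [h]; exact h0

lemma integral_mul_exp {c : ℝ} (hc : 0 < c) :
    ∫ x, x * Real.exp (-(c*x)) ∂(expMeasure 1) = 1/(1+c)^2 := by
  rw [integral_expMeasure_one]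
  have h : ∫ x in Ioi (0:ℝ), Real.exp (-x) * (x * Real.exp (-(c*x)))
      = ∫ x in Ioi (0:ℝ), x ^ ((2:ℝ)-1) * Real.exp (-((1+c) * x)) := by
    refine integral_congr_ae (Filter.Eventually.of_forall fun x => ?_)
    show Real.exp (-x) * (x * Real.exp (-(c*x))) = x ^ ((2:ℝ)-1) * Real.exp (-((1+c) * x))
    rw [show (2:ℝ)-1 = 1 from by norm_num, Real.rpow_one,
      show Real.exp (-x) * (x * Real.exp (-(c*x))) = x * (Real.exp (-x) * Real.exp (-(c*x)))
        from by ring, ← Real.exp_add]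
    ring_nf
  rw [h, Real.integral_rpow_mul_exp_neg_mul_Ioi two_pos (by linarith : (0:ℝ) < 1+c)]
  rw [show Real.Gamma 2 = 1 from by norm_num, mul_one,
    show (2:ℝ) = ((2:ℕ):ℝ) from by norm_num, Real.rpow_natCast, div_pow, one_pow]

lemma integral_prod_indep {Ω : Type*} [MeasurableSpace Ω] {μ : Measure Ω}
    [IsProbabilityMeasure μ]
    (g : ℕ → Ω → ℝ) (hind : iIndepFun g μ)
    (hm : ∀ i, Measurable (g i)) (hi : ∀ i, Integrable (g i) μ) (s : Finset ℕ) :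
    Integrable (fun ω => ∏ i ∈ s, g i ω) μ ∧
      ∫ ω, ∏ i ∈ s, g i ω ∂μ = ∏ i ∈ s, ∫ ω, g i ω ∂μ := by
  classical
  induction s using Finset.induction_on with
  | empty => simp
  | @insert a s ha ih =>
    have hfn : (fun ω => ∏ i ∈ s, g i ω) = (∏ i ∈ s, g i) := by
      funext ω; rw [Finset.prod_apply]
    have hdep : IndepFun (g a) (∏ i ∈ s, g i) μ :=
      (hind.indepFun_finsetProd_of_notMem hm ha).symm
    have hint : Integrable (g a * ∏ i ∈ s, g i) μ :=
      hdep.integrable_mul (hi a) (hfn ▸ ih.1)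
    constructor
    · have : (fun ω => ∏ i ∈ insert a s, g i ω) = (g a * ∏ i ∈ s, g i) := by
        funext ω
        rw [Finset.prod_insert ha, Pi.mul_apply, Finset.prod_apply]
      rw [this]; exact hint
    · have e1 : (fun ω => ∏ i ∈ insert a s, g i ω) = (g a * ∏ i ∈ s, g i) := by
        funext ω
        rw [Finset.prod_insert ha, Pi.mul_apply, Finset.prod_apply]
      calc ∫ ω, ∏ i ∈ insert a s, g i ω ∂μ
          = ∫ ω, (g a * ∏ i ∈ s, g i) ω ∂μ := by rw [e1]
        _ = (∫ ω, g a ω ∂μ) * ∫ ω, (∏ i ∈ s, g i) ω ∂μ :=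
            hdep.integral_mul_eq_mul_integral (hi a).aestronglyMeasurable (hfn ▸ ih.1).aestronglyMeasurable
        _ = ∏ i ∈ insert a s, ∫ ω, g i ω ∂μ := by
            rw [Finset.prod_insert ha, ← ih.2]
            congr 1
            rw [← hfn]


lemma aux_geom (s : ℝ) (h0 : 0 ≤ s) (h1 : s < 1) (A : Finset ℕ) :
    ∑ e ∈ A, s ^ e ≤ (1 - s)⁻¹ := by
  calc ∑ e ∈ A, s ^ e ≤ ∑' e : ℕ, s ^ e :=
        Summable.sum_le_tsum A (fun i _ => pow_nonneg h0 i) (summable_geometric_of_lt_one h0 h1)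
  _ = (1-s)⁻¹ := tsum_geometric_of_lt_one h0 h1

lemma aux_geom' (s : ℝ) (h0 : 0 ≤ s) (h1 : s < 1) (A : Finset ℕ) :
    ∑ e ∈ A, (e:ℝ) * s ^ e ≤ s / (1-s)^2 := by
  have hn : ‖s‖ < 1 := by rwa [Real.norm_eq_abs, abs_of_nonneg h0]
  calc ∑ e ∈ A, (e:ℝ) * s^e ≤ ∑' e : ℕ, (e:ℝ)*s^e :=
        Summable.sum_le_tsum A (fun i _ => by positivity) (hasSum_coe_mul_geometric_of_norm_lt_one hn).summable
  _ = s/(1-s)^2 := tsum_coe_mul_geometric_of_norm_lt_one hn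

lemma numeric_bound (α : ℝ) (hα : 0 < α) (k n : ℕ) (hk : 1 ≤ k) :
    ∑ l ∈ Finset.Icc k n, ∑ m ∈ Finset.Icc k l, ∑ j ∈ Finset.Icc 1 k,
      ((m - j : ℕ) : ℝ) * ((1/(1+2*α))^(l-m) * (1/(1+α))^(m-j+1))
    ≤ (1+2*α)*(1+α)/α^4 := by
  set r : ℝ := 1/(1+2*α) with hr
  set s : ℝ := 1/(1+α) with hs
  have h2α : (0:ℝ) < 1 + 2*α := by linarith
  have h1α : (0:ℝ) < 1 + α := by linarith
  have hr0 : 0 ≤ r := by positivity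
  have hs0 : 0 ≤ s := by positivity
  have hr1 : r < 1 := by rw [hr, div_lt_one h2α]; linarith
  have hs1 : s < 1 := by rw [hs, div_lt_one h1α]; linarith
  set C1 : ℝ := s * (1-s)⁻¹ with hC1
  set C2 : ℝ := s * (s/(1-s)^2) with hC2
  have h1ms : (0:ℝ) < 1 - s := by linarith
  have hC10 : 0 ≤ C1 := mul_nonneg hs0 (by positivity)
  have hC20 : 0 ≤ C2 := mul_nonneg hs0 (by positivity)
  -- inner bound
  have inner : ∀ m, k ≤ m →
      ∑ j ∈ Finset.Icc 1 k, ((m - j : ℕ) : ℝ) * s^(m-j+1)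
        ≤ s^(m-k) * (((m-k : ℕ) : ℝ) * C1 + C2) := by
    intro m hm
    have e1 : Finset.Icc 1 k = Finset.Ico 1 (k+1) := by rw [Finset.Ico_add_one_right_eq_Icc]
    rw [e1, Finset.sum_Ico_eq_sum_range]
    have e2 : k + 1 - 1 = k := by omega
    rw [e2]
    rw [← Finset.sum_range_reflect]
    have e3 : ∀ i ∈ Finset.range k,
        ((m - (1 + (k - 1 - i)) : ℕ) : ℝ) * s^(m - (1 + (k - 1 - i)) + 1)
          = s^(m-k) * ((((m - k : ℕ):ℝ) + (i:ℝ)) * s^(i+1)) := by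
      intro i hi
      rw [Finset.mem_range] at hi
      have h4 : m - (1 + (k - 1 - i)) = (m - k) + i := by omega
      rw [h4, show m - k + i + 1 = (m-k)+(i+1) from by omega, pow_add]
      push_cast
      ring
    rw [Finset.sum_congr rfl e3, ← Finset.mul_sum]
    have e4 : ∑ i ∈ Finset.range k, (((m - k : ℕ):ℝ) + (i:ℝ)) * s^(i+1)
        ≤ ((m-k : ℕ):ℝ) * C1 + C2 := by
      simp_rw [add_mul, Finset.sum_add_distrib]
      gcongr ?_ + ?_
      · calc ∑ i ∈ Finset.range k, ((m-k:ℕ):ℝ) * s^(i+1)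
            = ((m-k:ℕ):ℝ) * (s * ∑ i ∈ Finset.range k, s^i) := by
              rw [Finset.mul_sum, Finset.mul_sum]; congr 1; ext i; rw [pow_succ]; ring
        _ ≤ ((m-k:ℕ):ℝ) * (s * (1-s)⁻¹) := by
              gcongr
              exact aux_geom s hs0 hs1 _
        _ = ((m-k:ℕ):ℝ) * C1 := rfl
      · calc ∑ i ∈ Finset.range k, (i:ℝ) * s^(i+1)
            = s * ∑ i ∈ Finset.range k, (i:ℝ) * s^i := by
              rw [Finset.mul_sum]; congr 1; ext i; rw [pow_succ]; ring
        _ ≤ s * (s/(1-s)^2) := by gcongr; exact aux_geom' s hs0 hs1 _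
    have hp : (0:ℝ) ≤ s^(m-k) := pow_nonneg hs0 _
    exact mul_le_mul_of_nonneg_left e4 hp
  set N : ℕ := n + 1 - k with hN
  calc ∑ l ∈ Finset.Icc k n, ∑ m ∈ Finset.Icc k l, ∑ j ∈ Finset.Icc 1 k,
      ((m - j : ℕ) : ℝ) * (r^(l-m) * s^(m-j+1))
      = ∑ l ∈ Finset.Icc k n, ∑ m ∈ Finset.Icc k l,
          r^(l-m) * ∑ j ∈ Finset.Icc 1 k, ((m - j : ℕ) : ℝ) * s^(m-j+1) := by
        refine Finset.sum_congr rfl fun l hl => Finset.sum_congr rfl fun m hm => ?_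
        rw [Finset.mul_sum]
        exact Finset.sum_congr rfl fun j hj => by ring
    _ ≤ ∑ l ∈ Finset.Icc k n, ∑ m ∈ Finset.Icc k l,
          r^(l-m) * (s^(m-k) * (((m-k : ℕ) : ℝ) * C1 + C2)) := by
        refine Finset.sum_le_sum fun l hl => Finset.sum_le_sum fun m hm => ?_
        have hkm : k ≤ m := (Finset.mem_Icc.mp hm).1
        exact mul_le_mul_of_nonneg_left (inner m hkm) (pow_nonneg hr0 _)
    _ = ∑ L ∈ Finset.range N, ∑ b ∈ Finset.range (L+1),
          r^(L-b) * (s^b * ((b : ℝ) * C1 + C2)) := by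
        rw [show Finset.Icc k n = Finset.Ico k (n+1) from by rw [Finset.Ico_add_one_right_eq_Icc],
          Finset.sum_Ico_eq_sum_range]
        refine Finset.sum_congr rfl fun L hL => ?_
        rw [show Finset.Icc k (k+L) = Finset.Ico k (k+L+1) from by rw [Finset.Ico_add_one_right_eq_Icc],
          Finset.sum_Ico_eq_sum_range]
        rw [show k + L + 1 - k = L + 1 from by omega]
        refine Finset.sum_congr rfl fun b hb => ?_
        rw [show k + L - (k + b) = L - b from by omega,
          show k + b - k = b from by omega]
    _ = ∑ b ∈ Finset.range N, (s^b * ((b : ℝ) * C1 + C2)) * ∑ L ∈ Finset.Ico b N, r^(L-b) := by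
        rw [Finset.sum_comm' (t' := Finset.range N) (s' := fun b => Finset.Ico b N)
          (by intro x y; simp only [Finset.mem_range, Finset.mem_Ico]; omega)]
        refine Finset.sum_congr rfl fun b hb => ?_
        rw [Finset.mul_sum]
        exact Finset.sum_congr rfl fun L hL => by ring
    _ ≤ ∑ b ∈ Finset.range N, (s^b * ((b : ℝ) * C1 + C2)) * (1-r)⁻¹ := by
        refine Finset.sum_le_sum fun b hb => ?_
        refine mul_le_mul_of_nonneg_left ?_ ?_
        · rw [Finset.sum_Ico_eq_sum_range]
          calc ∑ a ∈ Finset.range (N - b), r ^ (b + a - b)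
              = ∑ a ∈ Finset.range (N - b), r ^ a := by
                refine Finset.sum_congr rfl fun a ha => by rw [show b + a - b = a from by omega]
            _ ≤ (1-r)⁻¹ := aux_geom r hr0 hr1 _
        · have hb0 : (0:ℝ) ≤ (b:ℝ) := Nat.cast_nonneg b
          have hsb := pow_nonneg hs0 b
          have : (0:ℝ) ≤ (b:ℝ) * C1 + C2 := by positivity
          positivity
    _ ≤ (1-r)⁻¹ * (C1 * (s/(1-s)^2) + C2 * (1-s)⁻¹) := by
        have hinv : (0:ℝ) ≤ (1-r)⁻¹ := by
          have : (0:ℝ) < 1 - r := by linarith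
          positivity
        calc ∑ b ∈ Finset.range N, (s^b * ((b : ℝ) * C1 + C2)) * (1-r)⁻¹
            = (1-r)⁻¹ * ((C1 * ∑ b ∈ Finset.range N, (b:ℝ) * s^b)
                + C2 * ∑ b ∈ Finset.range N, s^b) := by
              rw [Finset.mul_sum, Finset.mul_sum, ← Finset.sum_add_distrib, Finset.mul_sum]
              exact Finset.sum_congr rfl fun b hb => by ring
          _ ≤ (1-r)⁻¹ * (C1 * (s/(1-s)^2) + C2 * (1-s)⁻¹) := by
              refine mul_le_mul_of_nonneg_left (add_le_add ?_ ?_) hinv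
              · exact mul_le_mul_of_nonneg_left (aux_geom' s hs0 hs1 _) hC10
              · exact mul_le_mul_of_nonneg_left (aux_geom s hs0 hs1 _) hC20
    _ ≤ (1+2*α)*(1+α)/α^4 := by
        apply le_of_eq
        have e1 : 1 - s = α/(1+α) := by rw [hs]; field_simp; ring
        have e2 : 1 - r = 2*α/(1+2*α) := by rw [hr]; field_simp; ring
        rw [hC1, hC2, e1, e2, hs]
        field_simp
        ring

end Helpers
noncomputable def Faux (α : ℝ) (m i p : ℕ) (x : ℝ) : ℝ :=
  if m ≤ p then Real.exp (-(2*α*x)) else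
    if p = i then x * Real.exp (-(α*x)) else Real.exp (-(α*x))

lemma Faux_meas (α : ℝ) (m i p : ℕ) : Measurable (Faux α m i p) := by
  unfold Faux; split_ifs <;> fun_prop

lemma Faux_int (α : ℝ) (hα : 0 < α) (m i p : ℕ) :
    Integrable (Faux α m i p) (expMeasure 1) := by
  unfold Faux; split_ifs
  · exact integrable_exp_exp (by linarith)
  · exact integrable_mul_exp hα
  · exact integrable_exp_exp hα

lemma Faux_val (α : ℝ) (hα : 0 < α) (m i p : ℕ) :
    ∫ x, Faux α m i p x ∂(expMeasure 1)
      = if m ≤ p then 1/(1+2*α) else if p = i then 1/(1+α)^2 else 1/(1+α) := by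
  unfold Faux; split_ifs
  · exact integral_exp_exp (by linarith)
  · exact integral_mul_exp hα
  · exact integral_exp_exp hα

section Main
variable {Ω : Type*} [MeasurableSpace Ω] {μ : Measure Ω} [IsProbabilityMeasure μ]

lemma term_value (μ : Measure Ω) [IsProbabilityMeasure μ]
    (T : ℕ → Ω → ℝ) (hT0 : ∀ ω, T 0 ω = 0) (hTmeas : ∀ k, Measurable (T k))
    (hindep : iIndepFun
      (fun k ω => T (k + 1) ω - T k ω) μ)
    (hexp : ∀ k, Measure.map (fun ω => T (k + 1) ω - T k ω) μ = expMeasure 1)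
    (α : ℝ) (hα : 0 < α) (l m j : ℕ) (hjm : j ≤ m) (hml : m ≤ l) :
    Integrable (fun ω => Real.exp (α * (T m ω - T l ω)) * Real.exp (α * (T j ω - T l ω))
        * (T m ω - T j ω)) μ ∧
    ∫ ω, Real.exp (α * (T m ω - T l ω)) * Real.exp (α * (T j ω - T l ω))
        * (T m ω - T j ω) ∂μ
      = ((m - j : ℕ) : ℝ) * ((1/(1+2*α))^(l-m) * (1/(1+α))^(m-j+1)) := by
  classical
  set X : ℕ → Ω → ℝ := fun i ω => T (i+1) ω - T i ω with hXdef
  have hXmeas : ∀ i, Measurable (X i) := fun i => (hTmeas (i+1)).sub (hTmeas i)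
  have hmap : ∀ i, Measure.map (X i) μ = expMeasure 1 := hexp
  have hindepX : iIndepFun X μ := hindep
  -- telescoping
  have tele : ∀ a b : ℕ, a ≤ b → ∀ ω, (∑ p ∈ Finset.Ico a b, X p ω) = T b ω - T a ω := by
    intro a b hab ω
    rw [Finset.sum_Ico_eq_sub _ hab]
    have h1 : ∀ c : ℕ, ∑ p ∈ Finset.range c, X p ω = T c ω - T 0 ω := fun c =>
      Finset.sum_range_sub (fun p => T p ω) c
    rw [h1, h1, hT0]
    ring
  -- transfer
  have trans_int : ∀ (i : ℕ) (f : ℝ → ℝ), Measurable f → Integrable f (expMeasure 1) →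
      Integrable (fun ω => f (X i ω)) μ := by
    intro i f hf hif
    have h1 : Integrable f (Measure.map (X i) μ) := (hmap i).symm ▸ hif
    exact (integrable_map_measure (by rw [hmap i]; exact hf.aestronglyMeasurable)
      (hXmeas i).aemeasurable).mp h1
  have trans_val : ∀ (i : ℕ) (f : ℝ → ℝ), Measurable f →
      ∫ ω, f (X i ω) ∂μ = ∫ x, f x ∂(expMeasure 1) := by
    intro i f hf
    rw [← hmap i]
    exact (integral_map (hXmeas i).aemeasurable
      (by rw [hmap i]; exact hf.aestronglyMeasurable)).symm
  -- product expectations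
  have key : ∀ (i : ℕ) (s : Finset ℕ),
      Integrable (fun ω => ∏ p ∈ s, Faux α m i p (X p ω)) μ ∧
      ∫ ω, ∏ p ∈ s, Faux α m i p (X p ω) ∂μ
        = ∏ p ∈ s, (if m ≤ p then 1/(1+2*α) else if p = i then 1/(1+α)^2 else 1/(1+α)) := by
    intro i s
    have h := integral_prod_indep (fun p ω => Faux α m i p (X p ω))
      (hindepX.comp (fun p => Faux α m i p) (fun p => Faux_meas α m i p))
      (fun p => (Faux_meas α m i p).comp (hXmeas p))
      (fun p => trans_int p _ (Faux_meas α m i p) (Faux_int α hα m i p)) s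
    refine ⟨h.1, h.2.trans ?_⟩
    exact Finset.prod_congr rfl fun p _ => by
      rw [trans_val p _ (Faux_meas α m i p), Faux_val α hα m i p]
  -- pathwise identity
  have pathwise : ∀ ω, Real.exp (α * (T m ω - T l ω)) * Real.exp (α * (T j ω - T l ω))
      * (T m ω - T j ω)
      = ∑ i ∈ Finset.Ico j m, ∏ p ∈ Finset.Ico j l, Faux α m i p (X p ω) := by
    intro ω
    have hSA := tele m l hml ω
    have hSB := tele j m hjm ω
    have hA : ∀ i : ℕ, ∏ p ∈ Finset.Ico m l, Faux α m i p (X p ω)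
        = Real.exp (-(2*α*(T l ω - T m ω))) := by
      intro i
      have hc : ∀ p ∈ Finset.Ico m l, Faux α m i p (X p ω) = Real.exp (-(2*α * X p ω)) := by
        intro p hp
        rw [Finset.mem_Ico] at hp
        unfold Faux
        rw [if_pos hp.1]
      rw [Finset.prod_congr rfl hc, ← Real.exp_sum]
      congr 1
      rw [← hSA, Finset.mul_sum, ← Finset.sum_neg_distrib]
    have hB : ∀ i ∈ Finset.Ico j m, ∏ p ∈ Finset.Ico j m, Faux α m i p (X p ω)
        = X i ω * Real.exp (-(α*(T m ω - T j ω))) := by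
      intro i hi
      have hc : ∀ p ∈ Finset.Ico j m, Faux α m i p (X p ω)
          = (if p = i then X p ω else 1) * Real.exp (-(α * X p ω)) := by
        intro p hp
        rw [Finset.mem_Ico] at hp
        unfold Faux
        rw [if_neg (by omega : ¬ m ≤ p)]
        split_ifs with h
        · rfl
        · rw [one_mul]
      rw [Finset.prod_congr rfl hc, Finset.prod_mul_distrib,
        Finset.prod_ite_eq' (Finset.Ico j m) i (fun p => X p ω), if_pos hi, ← Real.exp_sum]
      congr 2
      rw [← hSB, Finset.mul_sum, ← Finset.sum_neg_distrib]
    have hsplit : ∀ i ∈ Finset.Ico j m, ∏ p ∈ Finset.Ico j l, Faux α m i p (X p ω)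
        = X i ω * Real.exp (-(α*(T m ω - T j ω))) * Real.exp (-(2*α*(T l ω - T m ω))) := by
      intro i hi
      rw [← Finset.prod_Ico_consecutive _ hjm hml, hA i, hB i hi]
    rw [Finset.sum_congr rfl hsplit, ← Finset.sum_mul, ← Finset.sum_mul, hSB,
      ← Real.exp_add, mul_assoc, ← Real.exp_add,
      show α * (T m ω - T l ω) + α * (T j ω - T l ω)
          = -(α*(T m ω - T j ω)) + -(2*α*(T l ω - T m ω)) from by ring]
    ring
  have hrw : (fun ω => Real.exp (α * (T m ω - T l ω)) * Real.exp (α * (T j ω - T l ω))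
      * (T m ω - T j ω))
      = fun ω => ∑ i ∈ Finset.Ico j m, ∏ p ∈ Finset.Ico j l, Faux α m i p (X p ω) :=
    funext pathwise
  constructor
  · rw [hrw]
    exact integrable_finset_sum _ (fun i _ => (key i _).1)
  · rw [hrw, integral_finset_sum _ (fun i _ => (key i _).1)]
    have hval : ∀ i ∈ Finset.Ico j m,
        ∫ ω, ∏ p ∈ Finset.Ico j l, Faux α m i p (X p ω) ∂μ
        = (1/(1+2*α))^(l-m) * (1/(1+α))^(m-j+1) := by
      intro i hi
      rw [(key i _).2, ← Finset.prod_Ico_consecutive _ hjm hml]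
      have h1 : (∏ p ∈ Finset.Ico m l,
          (if m ≤ p then 1/(1+2*α) else if p = i then 1/(1+α)^2 else 1/(1+α)))
          = (1/(1+2*α))^(l-m) := by
        rw [Finset.prod_congr rfl (fun p hp => if_pos (Finset.mem_Ico.mp hp).1),
          Finset.prod_const, Nat.card_Ico]
      have h2 : (∏ p ∈ Finset.Ico j m,
          (if m ≤ p then 1/(1+2*α) else if p = i then 1/(1+α)^2 else 1/(1+α)))
          = (1/(1+α))^(m-j+1) := by
        have hc : ∀ p ∈ Finset.Ico j m,
            (if m ≤ p then 1/(1+2*α) else if p = i then 1/(1+α)^2 else 1/(1+α))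
            = (if p = i then 1/(1+α) else 1) * (1/(1+α)) := by
          intro p hp
          rw [Finset.mem_Ico] at hp
          rw [if_neg (by omega : ¬ m ≤ p)]
          split_ifs with h
          · rw [sq, div_mul_div_comm, one_mul]
          · rw [one_mul]
        rw [Finset.prod_congr rfl hc, Finset.prod_mul_distrib,
          Finset.prod_ite_eq' (Finset.Ico j m) i (fun _ => 1/(1+α)), if_pos hi,
          Finset.prod_const, Nat.card_Ico, pow_succ, mul_comm]
      rw [h1, h2]; ring
    rw [Finset.sum_congr rfl hval, Finset.sum_const, Nat.card_Ico, nsmul_eq_mul]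

end Main

/-- If `(T_k)` are random times with `T_0 = 0` and i.i.d. rate-1
exponential increments, then for `α > 0`, `n ≥ 1` and every `1 ≤ k ≤ n`,
`E[Σ_{l=k}^n Σ_{m=k}^l Σ_{j=1}^k e^{α(T_m−T_l)} e^{α(T_j−T_l)} (T_m−T_j)]
  ≤ max{(1+2α)(1+α)³/(2α⁴), (1+2α)(1+α)²/α⁴}`, and in particular it is at most
`(1+2α)⁴/α⁴`. -/
theorem triple_sum_time_bound {Ω : Type*} [MeasurableSpace Ω] (μ : Measure Ω)
    [IsProbabilityMeasure μ]
    (T : ℕ → Ω → ℝ) (hT0 : ∀ ω, T 0 ω = 0) (hTmeas : ∀ k, Measurable (T k))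
    (hindep : iIndepFun
      (fun k ω => T (k + 1) ω - T k ω) μ)
    (hexp : ∀ k, Measure.map (fun ω => T (k + 1) ω - T k ω) μ = expMeasure 1)
    (α : ℝ) (hα : 0 < α) (n : ℕ) (hn : 1 ≤ n)
    (k : ℕ) (hk : 1 ≤ k) (hkn : k ≤ n) :
    (∫ ω, (∑ l ∈ Finset.Icc k n, ∑ m ∈ Finset.Icc k l, ∑ j ∈ Finset.Icc 1 k,
        Real.exp (α * (T m ω - T l ω)) * Real.exp (α * (T j ω - T l ω))
          * (T m ω - T j ω)) ∂μ
      ≤ max ((1 + 2 * α) * (1 + α) ^ 3 / (2 * α ^ 4))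
          ((1 + 2 * α) * (1 + α) ^ 2 / α ^ 4)) ∧
    (∫ ω, (∑ l ∈ Finset.Icc k n, ∑ m ∈ Finset.Icc k l, ∑ j ∈ Finset.Icc 1 k,
        Real.exp (α * (T m ω - T l ω)) * Real.exp (α * (T j ω - T l ω))
          * (T m ω - T j ω)) ∂μ
      ≤ (1 + 2 * α) ^ 4 / α ^ 4) := by
  have hterm : ∀ l ∈ Finset.Icc k n, ∀ m ∈ Finset.Icc k l, ∀ j ∈ Finset.Icc 1 k,
      Integrable (fun ω => Real.exp (α * (T m ω - T l ω)) * Real.exp (α * (T j ω - T l ω))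
          * (T m ω - T j ω)) μ ∧
      ∫ ω, Real.exp (α * (T m ω - T l ω)) * Real.exp (α * (T j ω - T l ω))
          * (T m ω - T j ω) ∂μ
        = ((m - j : ℕ) : ℝ) * ((1/(1+2*α))^(l-m) * (1/(1+α))^(m-j+1)) := by
    intro l hl m hm j hj
    exact term_value μ T hT0 hTmeas hindep hexp α hα l m j
      (le_trans (Finset.mem_Icc.mp hj).2 (Finset.mem_Icc.mp hm).1)
      (Finset.mem_Icc.mp hm).2
  have key : ∫ ω, (∑ l ∈ Finset.Icc k n, ∑ m ∈ Finset.Icc k l, ∑ j ∈ Finset.Icc 1 k,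
        Real.exp (α * (T m ω - T l ω)) * Real.exp (α * (T j ω - T l ω))
          * (T m ω - T j ω)) ∂μ
      ≤ (1+2*α)*(1+α)/α^4 := by
    have swap : ∫ ω, (∑ l ∈ Finset.Icc k n, ∑ m ∈ Finset.Icc k l, ∑ j ∈ Finset.Icc 1 k,
        Real.exp (α * (T m ω - T l ω)) * Real.exp (α * (T j ω - T l ω))
          * (T m ω - T j ω)) ∂μ
        = ∑ l ∈ Finset.Icc k n, ∑ m ∈ Finset.Icc k l, ∑ j ∈ Finset.Icc 1 k,
            ((m - j : ℕ) : ℝ) * ((1/(1+2*α))^(l-m) * (1/(1+α))^(m-j+1)) := by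
      rw [integral_finset_sum _ (fun l hl => integrable_finset_sum _ (fun m hm =>
        integrable_finset_sum _ (fun j hj => (hterm _ hl _ hm _ hj).1)))]
      refine Finset.sum_congr rfl fun l hl => ?_
      rw [integral_finset_sum _ (fun m hm =>
        integrable_finset_sum _ (fun j hj => (hterm _ hl _ hm _ hj).1))]
      refine Finset.sum_congr rfl fun m hm => ?_
      rw [integral_finset_sum _ (fun j hj => (hterm _ hl _ hm _ hj).1)]
      exact Finset.sum_congr rfl fun j hj => (hterm _ hl _ hm _ hj).2
    rw [swap]
    exact numeric_bound α hα k n hk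
  have h1α : (0:ℝ) < 1 + α := by linarith
  have h2α : (0:ℝ) < 1 + 2*α := by linarith
  have hα4 : (0:ℝ) < α^4 := by positivity
  constructor
  · refine le_trans key (le_trans ?_ (le_max_right _ _))
    refine (div_le_div_iff_of_pos_right hα4).mpr ?_
    nlinarith [hα, sq_nonneg α]
  · refine le_trans key ?_
    refine (div_le_div_iff_of_pos_right hα4).mpr ?_
    nlinarith [hα, sq_nonneg α, pow_nonneg hα.le 3, pow_nonneg hα.le 4]
end
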